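/- Let a > 100 be an integer and let (u₁, u₂, n) be a solution to the unit equation with u₁ = ε^{x₁}·δ^{y₁} and u₂ = s·ε^{x₂}·δ^{y₂} (s ∈ {1,-1}, integers x₁, y₁, x₂, y₂) such that x₁ = x₂ and y₁ - y₂ ∈ {0, 1, -1}. Then (u₁, u₂, n) is a trivial solution. -/

import Mathlib

open IntermediateField

noncomputable section

/-- The generator `ρ` of `K = ℚ(ρ) ⊆ ℝ` as an element of the intermediate field. -/
def rhoGen (ρ : ℝ) : ℚ⟮ρ⟯ := AdjoinSimple.gen ℚ ρ

/-- The order `ℤ[ρ]` inside `K = ℚ(ρ)`. -/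
def Zrho (ρ : ℝ) : Subalgebra ℤ ℚ⟮ρ⟯ := Algebra.adjoin ℤ {rhoGen ρ}

/-- `u` is a unit of the order `ℤ[ρ]`. -/
def IsZrhoUnit (ρ : ℝ) (u : ℚ⟮ρ⟯) : Prop :=
  u ∈ Zrho ρ ∧ ∃ v ∈ Zrho ρ, u * v = 1

/-- A solution of the unit equation: `u₁, u₂` are units of `ℤ[ρ]`, `n ∈ ℤ`,
`|n| ≤ a^{1/3}` and `u₁ + u₂ = n`. -/
def IsSolution (a : ℤ) (ρ : ℝ) (u₁ u₂ : ℚ⟮ρ⟯) (n : ℤ) : Prop :=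
  IsZrhoUnit ρ u₁ ∧ IsZrhoUnit ρ u₂ ∧
    |(n : ℝ)| ≤ (a : ℝ) ^ ((1 : ℝ) / 3) ∧ u₁ + u₂ = (n : ℚ⟮ρ⟯)

/-- One elementary operation on solution triples: change of signs, swap of the two
units, or application of an element of `Gal(K/ℚ)`. -/
inductive SolStep (ρ : ℝ) : ℚ⟮ρ⟯ × ℚ⟮ρ⟯ × ℤ → ℚ⟮ρ⟯ × ℚ⟮ρ⟯ × ℤ → Prop
  | neg (u₁ u₂ : ℚ⟮ρ⟯) (n : ℤ) : SolStep ρ (u₁, u₂, n) (-u₁, -u₂, -n)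
  | swap (u₁ u₂ : ℚ⟮ρ⟯) (n : ℤ) : SolStep ρ (u₁, u₂, n) (u₂, u₁, n)
  | galois (τ : ℚ⟮ρ⟯ ≃ₐ[ℚ] ℚ⟮ρ⟯) (u₁ u₂ : ℚ⟮ρ⟯) (n : ℤ) :
      SolStep ρ (u₁, u₂, n) (τ u₁, τ u₂, n)

/-- Two solution triples are equivalent if one is obtained from the other by a
combination of the elementary operations. -/
def SolEquiv (ρ : ℝ) : ℚ⟮ρ⟯ × ℚ⟮ρ⟯ × ℤ → ℚ⟮ρ⟯ × ℚ⟮ρ⟯ × ℤ → Prop :=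
  Relation.ReflTransGen (SolStep ρ)

/-- A solution triple is trivial if it is equivalent to `(1,1,2)`, to `(u,-u,0)`
for some unit `u` of `ℤ[ρ]`, or to `(ρ+1, -ρ, 1)`. -/
def IsTrivialSolution (ρ : ℝ) (u₁ u₂ : ℚ⟮ρ⟯) (n : ℤ) : Prop :=
  SolEquiv ρ (u₁, u₂, n) (1, 1, 2) ∨
  (∃ u : ℚ⟮ρ⟯, IsZrhoUnit ρ u ∧ SolEquiv ρ (u₁, u₂, n) (u, -u, 0)) ∨
  SolEquiv ρ (u₁, u₂, n) (rhoGen ρ + 1, -(rhoGen ρ), 1)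

end

/-!
Put `w = ε^x δ^y` with `y = min(y₁, y₂)`. Then `u₁ + u₂ = w c` with `c` one of `2`, `0`,
`δ + 1 = 2 + ρ⁻¹`, `δ - 1 = ρ⁻¹` and `1 - δ = -ρ⁻¹`. The real embeddings of `K` send `ρ` to `ρ`,
`-(ρ + 1)/ρ` and `-1/(ρ + 1)`; the product of the three images is `1` for `ε` and `-1` for `δ`,
so taking this norm of `w c = n` gives `n³ = ±N(c)`. As `|N(2 + ρ⁻¹)| = 2a + 3 > a ≥ |n|³`, the
case `c = δ + 1` is impossible, and `c = 0` is the solution `(w, -w, 0)`. Otherwise `N(2) = 8`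
and `N(ρ⁻¹) = 1`, together with `w > 0` in the identity embedding, fix `n`, hence `w`, and the
solution is `(1, 1, 2)` or `(ρ + 1, -ρ, 1)` up to sign and order.
-/

open IntermediateField Polynomial

noncomputable def simplestCubic (a : ℤ) : ℚ[X] :=
  X ^ 3 - C (a : ℚ) * X ^ 2 - C ((a : ℚ) + 3) * X - 1

lemma simplestCubic_natDegree (a : ℤ) : (simplestCubic a).natDegree = 3 := by
  unfold simplestCubic; compute_degree!

lemma simplestCubic_monic (a : ℤ) : (simplestCubic a).Monic := by
  unfold simplestCubic; monicity!

lemma aeval_simplestCubic (a : ℤ) (r : ℝ) :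
    aeval r (simplestCubic a) = r ^ 3 - a * r ^ 2 - (a + 3) * r - 1 := by
  simp [simplestCubic]

lemma simplestCubic_not_isRoot (a : ℤ) (r : ℚ) : ¬ (simplestCubic a).IsRoot r := by
  intro hr
  replace hr : r ^ 3 - a * r ^ 2 - (a + 3) * r - 1 = 0 := by simpa [simplestCubic] using hr
  obtain ⟨z, rfl, hz⟩ := exists_integer_of_is_root_of_monic
    (K := ℚ) (p := X ^ 3 - C a * X ^ 2 - C (a + 3) * X - 1) (r := r) (by monicity!) (by
      simp only [map_sub, map_mul, map_pow, aeval_X, aeval_C, map_one]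
      push_cast
      exact hr)
  rw [eq_intCast] at hr
  replace hr : z ^ 3 - a * z ^ 2 - (a + 3) * z - 1 = 0 := by exact_mod_cast hr
  replace hz : z ∣ 1 := by simpa [coeff_X, coeff_C] using hz
  rcases Int.isUnit_iff.mp (isUnit_of_dvd_one hz) with rfl | rfl <;> omega

lemma simplestCubic_irreducible (a : ℤ) : Irreducible (simplestCubic a) := by
  rw [(simplestCubic_monic a).irreducible_iff_roots_eq_zero_of_degree_le_three
    (by rw [simplestCubic_natDegree]; norm_num) (by rw [simplestCubic_natDegree]),
    Multiset.eq_zero_iff_forall_notMem]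
  intro r hr
  rw [mem_roots (simplestCubic_monic a).ne_zero] at hr
  exact simplestCubic_not_isRoot a r hr

lemma exists_algHom_gen_eq {F E K : Type*} [Field F] [Field E] [Field K] [Algebra F E]
    [Algebra F K] {α : E} (hα : IsIntegral F α) {r : K} (hr : aeval r (minpoly F α) = 0) :
    ∃ e : F⟮α⟯ →ₐ[F] K, e (AdjoinSimple.gen F α) = r :=
  ⟨_, algHomAdjoinIntegralEquiv_symm_apply_gen F hα ⟨r, mem_aroots.mpr ⟨minpoly.ne_zero hα, hr⟩⟩⟩

lemma cube_eq_neg_one_zpow_mul {K L : Type*} [Field K] [Field L] {θ : K} (e₁ e₂ e₃ : K →+* L)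
    (hθ : e₁ θ * e₂ θ * e₃ θ = 1)
    (hδ : (1 + (e₁ θ)⁻¹) * (1 + (e₂ θ)⁻¹) * (1 + (e₃ θ)⁻¹) = -1)
    {x y n : ℤ} {c : K} (h : θ ^ x * (1 + θ⁻¹) ^ y * c = n) :
    (n : L) ^ 3 = (-1) ^ y * (e₁ c * e₂ c * e₃ c) := by
  have he : ∀ e : K →+* L, e θ ^ x * (1 + (e θ)⁻¹) ^ y * e c = n := fun e => by
    simpa using congrArg e h
  calc (n : L) ^ 3
      = (e₁ θ ^ x * (1 + (e₁ θ)⁻¹) ^ y * e₁ c) * (e₂ θ ^ x * (1 + (e₂ θ)⁻¹) ^ y * e₂ c)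
        * (e₃ θ ^ x * (1 + (e₃ θ)⁻¹) ^ y * e₃ c) := by rw [he, he, he]; ring
    _ = (e₁ θ * e₂ θ * e₃ θ) ^ x * ((1 + (e₁ θ)⁻¹) * (1 + (e₂ θ)⁻¹) * (1 + (e₃ θ)⁻¹)) ^ y
        * (e₁ c * e₂ c * e₃ c) := by simp only [mul_zpow]; ring
    _ = (-1) ^ y * (e₁ c * e₂ c * e₃ c) := by rw [hθ, hδ, one_zpow, one_mul]

lemma eq_of_cube_eq_neg_one_zpow_mul_cube {n m y : ℤ} (hn : 0 < n) (hm : 0 < m)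
    (h : (n : ℝ) ^ 3 = (-1) ^ y * (m : ℝ) ^ 3) : n = m := by
  rw [neg_one_zpow_eq_ite] at h
  split_ifs at h
  · exact_mod_cast (Odd.strictMono_pow (R := ℝ) (n := 3) (by decide)).injective
      (by simpa using h : (n : ℝ) ^ 3 = (m : ℝ) ^ 3)
  · have : (0 : ℝ) < n ^ 3 + m ^ 3 := by positivity
    linarith

lemma pow_three_le_of_le_rpow {t b : ℝ} (ht : 0 ≤ t) (hb : 0 ≤ b) (h : t ≤ b ^ ((1 : ℝ) / 3)) :
    t ^ 3 ≤ b := by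
  rw [one_div, Real.le_rpow_inv_iff_of_pos ht hb three_pos] at h
  exact_mod_cast h

section

variable {ρ : ℝ}

lemma val_rhoGen : (ℚ⟮ρ⟯).val (rhoGen ρ) = ρ := AdjoinSimple.coe_gen ℚ ρ

lemma rhoGen_ne_zero (hρ : 0 < ρ) : rhoGen ρ ≠ 0 := fun h =>
  hρ.ne' (by simpa only [val_rhoGen, map_zero] using congrArg (ℚ⟮ρ⟯).val h)

lemma one_add_inv_rhoGen_ne_zero (hρ : 0 < ρ) : 1 + (rhoGen ρ)⁻¹ ≠ 0 := fun h =>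
  (by positivity : (0 : ℝ) < 1 + ρ⁻¹).ne' (by
    simpa only [map_add, map_one, map_inv₀, val_rhoGen, map_zero] using congrArg (ℚ⟮ρ⟯).val h)

lemma intCast_pos_of_unit_mul_eq (hρ : 0 < ρ) {x y n : ℤ} {c : ℚ⟮ρ⟯}
    (hc : 0 < (ℚ⟮ρ⟯).val c) (h : rhoGen ρ ^ x * (1 + (rhoGen ρ)⁻¹) ^ y * c = n) : 0 < n := by
  have hval := congrArg (ℚ⟮ρ⟯).val h
  simp only [map_mul, map_zpow₀, map_add, map_one, map_inv₀, map_intCast, val_rhoGen] at hval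
  exact_mod_cast hval ▸ mul_pos (by positivity) hc

end

section

variable {a : ℤ} {ρ : ℝ} (hroot : ρ ^ 3 - (a : ℝ) * ρ ^ 2 - ((a : ℝ) + 3) * ρ - 1 = 0)
include hroot

lemma minpoly_eq_simplestCubic : minpoly ℚ ρ = simplestCubic a :=
  (minpoly.eq_of_irreducible_of_monic (simplestCubic_irreducible a)
    (by rw [aeval_simplestCubic]; exact hroot) (simplestCubic_monic a)).symm

lemma exists_algHom_rhoGen_eq {r : ℝ}
    (hr : r ^ 3 - (a : ℝ) * r ^ 2 - ((a : ℝ) + 3) * r - 1 = 0) :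
    ∃ e : ℚ⟮ρ⟯ →ₐ[ℚ] ℝ, e (rhoGen ρ) = r := by
  refine exists_algHom_gen_eq ⟨simplestCubic a, simplestCubic_monic a, ?_⟩ ?_
  · rw [← aeval_def, aeval_simplestCubic, hroot]
  · rw [minpoly_eq_simplestCubic hroot, aeval_simplestCubic, hr]

variable (hρ : 0 < ρ)
include hρ

lemma cube_eq_of_unit_mul_eq_intCast {x y n : ℤ} {c : ℚ⟮ρ⟯} (g : ℝ → ℝ)
    (hg : ∀ e : ℚ⟮ρ⟯ →ₐ[ℚ] ℝ, e c = g (e (rhoGen ρ)))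
    (h : rhoGen ρ ^ x * (1 + (rhoGen ρ)⁻¹) ^ y * c = n) :
    (n : ℝ) ^ 3 = (-1) ^ y * (g ρ * g (-(ρ + 1) / ρ) * g (-1 / (ρ + 1))) := by
  have hρ₀ : ρ ≠ 0 := hρ.ne'
  have hρ₁ : ρ + 1 ≠ 0 := by positivity
  obtain ⟨e₂, he₂⟩ := exists_algHom_rhoGen_eq hroot (r := -(ρ + 1) / ρ) (by
    field_simp; linear_combination hroot)
  obtain ⟨e₃, he₃⟩ := exists_algHom_rhoGen_eq hroot (r := -1 / (ρ + 1)) (by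
    field_simp; linear_combination -hroot)
  have he₁ := val_rhoGen (ρ := ρ)
  have := cube_eq_neg_one_zpow_mul (ℚ⟮ρ⟯).val.toRingHom e₂.toRingHom e₃.toRingHom ?_ ?_ h
  all_goals simp only [AlgHom.toRingHom_eq_coe, RingHom.coe_coe] at *
  · have hc : (ℚ⟮ρ⟯).val c = g ρ := (hg (ℚ⟮ρ⟯).val).trans (congrArg g he₁)
    rwa [hg e₂, hg e₃, hc, he₂, he₃] at this
  · rw [he₁, he₂, he₃]; field_simp
  · rw [he₁, he₂, he₃]; field_simp; ring

lemma unit_mul_two_eq_intCast {x y n : ℤ}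
    (h : rhoGen ρ ^ x * (1 + (rhoGen ρ)⁻¹) ^ y * 2 = n) :
    n = 2 ∧ rhoGen ρ ^ x * (1 + (rhoGen ρ)⁻¹) ^ y = 1 := by
  obtain rfl : n = 2 := by
    refine eq_of_cube_eq_neg_one_zpow_mul_cube (y := y)
      (intCast_pos_of_unit_mul_eq hρ ?_ h) two_pos ?_
    · rw [map_ofNat]; exact two_pos
    · rw [cube_eq_of_unit_mul_eq_intCast hroot hρ (fun _ => 2) (fun e => map_ofNat e 2) h]
      norm_num
  push_cast at h
  exact ⟨rfl, by linear_combination h / 2⟩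

lemma unit_mul_inv_eq_intCast {x y n : ℤ}
    (h : rhoGen ρ ^ x * (1 + (rhoGen ρ)⁻¹) ^ y * (rhoGen ρ)⁻¹ = n) :
    n = 1 ∧ rhoGen ρ ^ x * (1 + (rhoGen ρ)⁻¹) ^ y = rhoGen ρ := by
  obtain rfl : n = 1 := by
    refine eq_of_cube_eq_neg_one_zpow_mul_cube (y := y)
      (intCast_pos_of_unit_mul_eq hρ ?_ h) one_pos ?_
    · rw [map_inv₀, val_rhoGen]; positivity
    · rw [cube_eq_of_unit_mul_eq_intCast hroot hρ (·⁻¹) (fun e => map_inv₀ e _) h]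
      field_simp
      norm_num
  push_cast at h
  exact ⟨rfl, (mul_inv_eq_one₀ (rhoGen_ne_zero hρ)).mp h⟩

lemma unit_mul_two_add_inv_ne_intCast {x y n : ℤ} (hn : |(n : ℝ)| ^ 3 ≤ a) :
    rhoGen ρ ^ x * (1 + (rhoGen ρ)⁻¹) ^ y * (2 + (rhoGen ρ)⁻¹) ≠ n := by
  intro h
  have hρ₁ : ρ + 1 ≠ 0 := by positivity
  have hcube := cube_eq_of_unit_mul_eq_intCast hroot hρ (2 + ·⁻¹)
    (fun e => by rw [map_add, map_ofNat, map_inv₀]) h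
  -- the norm of `δ + 1 = 2 + ρ⁻¹` is `-8 f_a(-1/2) = -(2a + 3)`
  have hnorm : (2 + ρ⁻¹) * (2 + (-(ρ + 1) / ρ)⁻¹) * (2 + (-1 / (ρ + 1))⁻¹) = -(2 * a + 3) := by
    field_simp
    linear_combination -2 * hroot
  rw [hnorm] at hcube
  have habs := congrArg abs hcube
  rw [abs_mul, abs_neg_one_zpow, one_mul, abs_pow, abs_neg] at habs
  have : 0 ≤ |(n : ℝ)| ^ 3 := by positivity
  linarith [le_abs_self (2 * (a : ℝ) + 3)]

lemma isTrivialSolution_of_eq_exponent {x y n : ℤ} {s : ℚ⟮ρ⟯}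
    (hunit : IsZrhoUnit ρ (rhoGen ρ ^ x * (1 + (rhoGen ρ)⁻¹) ^ y)) (hs : s = 1 ∨ s = -1)
    (hadd : rhoGen ρ ^ x * (1 + (rhoGen ρ)⁻¹) ^ y
      + s * rhoGen ρ ^ x * (1 + (rhoGen ρ)⁻¹) ^ y = n) :
    IsTrivialSolution ρ (rhoGen ρ ^ x * (1 + (rhoGen ρ)⁻¹) ^ y)
      (s * rhoGen ρ ^ x * (1 + (rhoGen ρ)⁻¹) ^ y) n := by
  rcases hs with rfl | rfl
  · obtain ⟨rfl, hw⟩ := unit_mul_two_eq_intCast hroot hρ (by linear_combination hadd)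
    rw [one_mul, hw]
    exact .inl .refl
  · obtain rfl : n = 0 := by exact_mod_cast (by linear_combination -hadd : (n : ℚ⟮ρ⟯) = 0)
    rw [neg_one_mul, neg_mul]
    exact .inr (.inl ⟨_, hunit, .refl⟩)

lemma isTrivialSolution_of_exponent_eq_succ {x y n : ℤ} {s : ℚ⟮ρ⟯}
    (hn : |(n : ℝ)| ^ 3 ≤ a) (hs : s = 1 ∨ s = -1)
    (hadd : rhoGen ρ ^ x * (1 + (rhoGen ρ)⁻¹) ^ (y + 1)
      + s * rhoGen ρ ^ x * (1 + (rhoGen ρ)⁻¹) ^ y = n) :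
    IsTrivialSolution ρ (rhoGen ρ ^ x * (1 + (rhoGen ρ)⁻¹) ^ (y + 1))
      (s * rhoGen ρ ^ x * (1 + (rhoGen ρ)⁻¹) ^ y) n := by
  rw [zpow_add_one₀ (one_add_inv_rhoGen_ne_zero hρ)] at hadd ⊢
  rcases hs with rfl | rfl
  · exact absurd (by linear_combination hadd) (unit_mul_two_add_inv_ne_intCast hroot hρ hn)
  · obtain ⟨rfl, hw⟩ := unit_mul_inv_eq_intCast hroot hρ (by linear_combination hadd)
    have hu₁ : rhoGen ρ ^ x * ((1 + (rhoGen ρ)⁻¹) ^ y * (1 + (rhoGen ρ)⁻¹)) = rhoGen ρ + 1 := by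
      rw [← mul_assoc, hw, mul_one_add, mul_inv_cancel₀ (rhoGen_ne_zero hρ)]
    rw [hu₁, neg_one_mul, neg_mul, hw]
    exact .inr (.inr .refl)

lemma isTrivialSolution_of_succ_exponent {x y n : ℤ} {s : ℚ⟮ρ⟯}
    (hn : |(n : ℝ)| ^ 3 ≤ a) (hs : s = 1 ∨ s = -1)
    (hadd : rhoGen ρ ^ x * (1 + (rhoGen ρ)⁻¹) ^ y
      + s * rhoGen ρ ^ x * (1 + (rhoGen ρ)⁻¹) ^ (y + 1) = n) :
    IsTrivialSolution ρ (rhoGen ρ ^ x * (1 + (rhoGen ρ)⁻¹) ^ y)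
      (s * rhoGen ρ ^ x * (1 + (rhoGen ρ)⁻¹) ^ (y + 1)) n := by
  rw [zpow_add_one₀ (one_add_inv_rhoGen_ne_zero hρ)] at hadd ⊢
  rcases hs with rfl | rfl
  · exact absurd (by linear_combination hadd) (unit_mul_two_add_inv_ne_intCast hroot hρ hn)
  · obtain ⟨hn, hw⟩ := unit_mul_inv_eq_intCast hroot hρ (n := -n) (by
      push_cast; linear_combination -hadd)
    obtain rfl : n = -1 := by omega
    have hu₂ : -1 * rhoGen ρ ^ x * ((1 + (rhoGen ρ)⁻¹) ^ y * (1 + (rhoGen ρ)⁻¹))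
        = -(rhoGen ρ + 1) := by
      rw [neg_one_mul, neg_mul, ← mul_assoc, hw, mul_one_add, mul_inv_cancel₀ (rhoGen_ne_zero hρ)]
    rw [hu₂, hw]
    refine .inr (.inr (.head ?_ (.single (SolStep.swap (-(rhoGen ρ)) (rhoGen ρ + 1) 1))))
    simpa only [neg_neg] using SolStep.neg (rhoGen ρ) (-(rhoGen ρ + 1)) (-1)

end

theorem easy_special_case_trivial_general (a : ℤ) (ha : 100 < a) (ρ : ℝ)
    (hroot : ρ ^ 3 - (a : ℝ) * ρ ^ 2 - ((a : ℝ) + 3) * ρ - 1 = 0)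
    (hρ₁ : (a : ℝ) + 1 < ρ)
    (u₁ u₂ : ℚ⟮ρ⟯) (n : ℤ) (hsol : IsSolution a ρ u₁ u₂ n)
    (x₁ y₁ x₂ y₂ : ℤ) (s : ℚ⟮ρ⟯) (hs : s = 1 ∨ s = -1)
    (hu₁ : u₁ = (rhoGen ρ) ^ x₁ * (1 + (rhoGen ρ)⁻¹) ^ y₁)
    (hu₂ : u₂ = s * (rhoGen ρ) ^ x₂ * (1 + (rhoGen ρ)⁻¹) ^ y₂)
    (hx : x₁ = x₂) (hy : y₁ - y₂ = 0 ∨ y₁ - y₂ = 1 ∨ y₁ - y₂ = -1) :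
    IsTrivialSolution ρ u₁ u₂ n := by
  obtain ⟨hunit₁, -, hn, hadd⟩ := hsol
  have ha₀ : (0 : ℝ) ≤ a := by exact_mod_cast (by omega : (0 : ℤ) ≤ a)
  have hρ : 0 < ρ := by linarith
  have hn₃ : |(n : ℝ)| ^ 3 ≤ a := pow_three_le_of_le_rpow (abs_nonneg _) ha₀ hn
  subst hx hu₁ hu₂
  rcases hy with hy | hy | hy
  · obtain rfl : y₁ = y₂ := by omega
    exact isTrivialSolution_of_eq_exponent hroot hρ hunit₁ hs hadd
  · obtain rfl : y₁ = y₂ + 1 := by omega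
    exact isTrivialSolution_of_exponent_eq_succ hroot hρ hn₃ hs hadd
  · obtain rfl : y₂ = y₁ + 1 := by omega
    exact isTrivialSolution_of_succ_exponent hroot hρ hn₃ hs hadd

/-- Let `a > 100` be an integer, `ρ` the largest real root of `f_a`
(so `a+1 < ρ < a+2`), `ε = ρ` and `δ = 1 + 1/ρ` (as elements of `K = ℚ(ρ)`).
Any solution `(u₁, u₂, n)` of the unit equation with `u₁ = ε^{x₁}·δ^{y₁}`,
`u₂ = s·ε^{x₂}·δ^{y₂}`, `s ∈ {1,-1}`, `x₁ = x₂` and `y₁ - y₂ ∈ {0, 1, -1}`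
is a trivial solution. -/
theorem easy_special_case_trivial (a : ℤ) (ha : 100 < a) (ρ : ℝ)
    (hroot : ρ ^ 3 - (a : ℝ) * ρ ^ 2 - ((a : ℝ) + 3) * ρ - 1 = 0)
    (hρ₁ : (a : ℝ) + 1 < ρ) (hρ₂ : ρ < (a : ℝ) + 2)
    (u₁ u₂ : ℚ⟮ρ⟯) (n : ℤ) (hsol : IsSolution a ρ u₁ u₂ n)
    (x₁ y₁ x₂ y₂ : ℤ) (s : ℚ⟮ρ⟯) (hs : s = 1 ∨ s = -1)
    (hu₁ : u₁ = (rhoGen ρ) ^ x₁ * (1 + (rhoGen ρ)⁻¹) ^ y₁)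
    (hu₂ : u₂ = s * (rhoGen ρ) ^ x₂ * (1 + (rhoGen ρ)⁻¹) ^ y₂)
    (hx : x₁ = x₂) (hy : y₁ - y₂ = 0 ∨ y₁ - y₂ = 1 ∨ y₁ - y₂ = -1) :
    IsTrivialSolution ρ u₁ u₂ n :=
  easy_special_case_trivial_general a ha ρ hroot hρ₁ u₁ u₂ n hsol x₁ y₁ x₂ y₂ s hs hu₁ hu₂ hx hy
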